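/- Let k ≥ 1 and let a_1,…,a_k and b_1,…,b_k be real numbers with strict interlacing b_1 > a_1 > b_2 > a_2 > … > a_{k−1} > b_k > |a_k|. For l = 1,…,k define w_l = −(∏_{j=1}^{k}(a_l² − b_j²)) / (∏_{j≠l}(a_l² − a_j²)). Then w_l > 0 for every l = 1,…,k, and for every s = 1,…,k one has ∑_{l=1}^{k} w_l/(b_s² − a_l²) = 1. -/
import Mathlib


open Matrix Polynomial

open Finset Polynomial

lemma cauchy_aux (k : ℕ) (A B : Fin k → ℝ)
    (hord : ∀ l j : Fin k, ((j ≤ l → A l < B j) ∧ (l < j → B j < A l))) :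
    (∀ l : Fin k,
      0 < -(∏ j : Fin k, (A l - B j)) /
            ∏ j ∈ Finset.univ.erase l, (A l - A j)) ∧
    (∀ s : Fin k,
      ∑ l : Fin k,
        (-(∏ j : Fin k, (A l - B j)) /
            ∏ j ∈ Finset.univ.erase l, (A l - A j)) / (B s - A l)
        = 1) := by
  have hAanti : ∀ i j : Fin k, i < j → A j < A i := fun i j hij =>
    ((hord j j).1 le_rfl).trans ((hord i j).2 hij)
  have hAinj : Function.Injective A := by
    intro i j h
    by_contra hne
    rcases (Ne.lt_or_gt hne) with h' | h'
    · exact absurd h (ne_of_gt (hAanti i j h'))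
    · exact absurd h.symm (ne_of_gt (hAanti j i h'))
  have hDne : ∀ l : Fin k, (∏ j ∈ Finset.univ.erase l, (A l - A j)) ≠ 0 := by
    intro l
    rw [Finset.prod_ne_zero_iff]
    intro j hj
    exact sub_ne_zero_of_ne (fun h => (Finset.mem_erase.mp hj).1 (hAinj h).symm)
  have hND : ∀ l : Fin k,
      (∏ j : Fin k, (A l - B j)) * (∏ j ∈ Finset.univ.erase l, (A l - A j)) < 0 := by
    intro l
    rw [← Finset.mul_prod_erase Finset.univ (fun j => A l - B j) (Finset.mem_univ l),
      mul_assoc, ← Finset.prod_mul_distrib]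
    apply mul_neg_of_neg_of_pos
    · exact sub_neg.mpr ((hord l l).1 le_rfl)
    · apply Finset.prod_pos
      intro j hj
      rcases (Finset.mem_erase.mp hj).1.lt_or_gt with hjl | hlj
      · exact mul_pos_of_neg_of_neg (sub_neg.mpr ((hord l j).1 hjl.le))
          (sub_neg.mpr (hAanti j l hjl))
      · exact mul_pos (sub_pos.mpr ((hord l j).2 hlj)) (sub_pos.mpr (hAanti l j hlj))
  constructor
  · intro l
    set N := ∏ j : Fin k, (A l - B j)
    set D := ∏ j ∈ Finset.univ.erase l, (A l - A j)
    calc (0:ℝ) < -(N * D) / (D * D) :=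
          div_pos (neg_pos.2 (hND l)) (mul_self_pos.2 (hDne l))
      _ = -N * D / (D * D) := by rw [neg_mul]
      _ = -N / D := mul_div_mul_right _ _ (hDne l)
  · intro s
    have hne : ∀ j : Fin k, B s ≠ A j := by
      intro j
      rcases le_or_gt s j with h | h
      · exact ne_of_gt ((hord j s).1 h)
      · exact ne_of_lt ((hord j s).2 h)
    set P := Lagrange.nodal Finset.univ A with hP
    set Q := Lagrange.nodal Finset.univ B with hQ
    have hAinjOn : Set.InjOn A (Finset.univ : Finset (Fin k)) := hAinj.injOn
    have hd : Q.degree = P.degree := by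
      rw [hP, hQ, Lagrange.degree_nodal, Lagrange.degree_nodal]
    have hq0 : Q ≠ 0 := Lagrange.nodal_ne_zero
    have hlc : Q.leadingCoeff = P.leadingCoeff := by
      rw [hP, hQ, Lagrange.nodal_monic.leadingCoeff, Lagrange.nodal_monic.leadingCoeff]
    have hQdeg : Q.degree = (#(Finset.univ : Finset (Fin k)) : WithBot ℕ) := by
      rw [hQ, Lagrange.degree_nodal]
    have hfd : (Q - P).degree < (#(Finset.univ : Finset (Fin k)) : WithBot ℕ) :=
      hQdeg ▸ Polynomial.degree_sub_lt hd hq0 hlc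
    have hinterp := Lagrange.eq_interpolate hAinjOn hfd
    have heval := congrArg (eval (B s)) hinterp
    rw [Lagrange.eval_interpolate_not_at_node _ (fun i _ => hne i)] at heval
    have hQ0 : eval (B s) Q = 0 := Lagrange.eval_nodal_at_node (Finset.mem_univ s)
    have hE : eval (B s) P ≠ 0 := Lagrange.eval_nodal_not_at_node (fun i _ => hne i)
    have hfA : ∀ l : Fin k, eval (A l) (Q - P) = ∏ j : Fin k, (A l - B j) := by
      intro l
      rw [eval_sub, hQ, Lagrange.eval_nodal,
        Lagrange.eval_nodal_at_node (Finset.mem_univ l), sub_zero]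
    have hS : ∑ l : Fin k,
        Lagrange.nodalWeight Finset.univ A l * (B s - A l)⁻¹ * eval (A l) (Q - P) = -1 := by
      apply mul_left_cancel₀ hE
      rw [← heval, eval_sub, hQ0, zero_sub, mul_neg_one]
    have hterm : ∀ l : Fin k,
        (-(∏ j : Fin k, (A l - B j)) / ∏ j ∈ Finset.univ.erase l, (A l - A j)) / (B s - A l)
        = -(Lagrange.nodalWeight Finset.univ A l * (B s - A l)⁻¹ * eval (A l) (Q - P)) := by
      intro l
      rw [hfA l, Lagrange.nodalWeight, Finset.prod_inv_distrib, div_div, div_eq_mul_inv,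
        mul_inv, neg_mul]
      ring
    rw [Finset.sum_congr rfl (fun l _ => hterm l), Finset.sum_neg_distrib, hS, neg_neg]

/-- Under strict interlacing `b₁ > a₁ > b₂ > a₂ > … > a_{k-1} > b_k > |a_k|`, the
Cauchy-system solutions `wₗ = -(∏ⱼ(aₗ² - bⱼ²)) / (∏_{j≠l}(aₗ² - aⱼ²))` are positive
and satisfy `∑ₗ wₗ / (bₛ² - aₗ²) = 1` for every `s`. -/
theorem statement8 (k : ℕ) (hk : 1 ≤ k) (a b : Fin k → ℝ)
    (h1 : ∀ i : ℕ, ∀ h : i + 1 < k, b ⟨i, by omega⟩ > a ⟨i, by omega⟩)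
    (h2 : ∀ i : ℕ, ∀ h : i + 1 < k, a ⟨i, by omega⟩ > b ⟨i + 1, h⟩)
    (h3 : b ⟨k - 1, by omega⟩ > |a ⟨k - 1, by omega⟩|) :
    (∀ l : Fin k,
      0 < -(∏ j : Fin k, (a l ^ 2 - b j ^ 2)) /
            ∏ j ∈ Finset.univ.erase l, (a l ^ 2 - a j ^ 2)) ∧
    (∀ s : Fin k,
      ∑ l : Fin k,
        (-(∏ j : Fin k, (a l ^ 2 - b j ^ 2)) /
            ∏ j ∈ Finset.univ.erase l, (a l ^ 2 - a j ^ 2)) / (b s ^ 2 - a l ^ 2)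
        = 1) := by
  have step : ∀ (j : ℕ) (h : j + 1 < k), b ⟨j + 1, h⟩ < b ⟨j, by omega⟩ :=
    fun j h => (h2 j h).trans (h1 j h)
  have hbb : ∀ (j i : ℕ) (hi : i < k) (hj : j < k), i < j → b ⟨j, hj⟩ < b ⟨i, hi⟩ := by
    intro j
    induction j with
    | zero => intro i hi hj hij; omega
    | succ n ih =>
      intro i hi hj hij
      rcases Nat.lt_or_ge i n with h | h
      · exact (step n hj).trans (ih i hi (by omega) h)
      · have hin : i = n := by omega
        subst hin
        exact step i hj
  have hble : ∀ (j i : ℕ) (hi : i < k) (hj : j < k), i ≤ j → b ⟨j, hj⟩ ≤ b ⟨i, hi⟩ := by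
    intro j i hi hj hij
    rcases eq_or_lt_of_le hij with h | h
    · subst h; exact le_refl _
    · exact (hbb j i hi hj h).le
  have hbpos : ∀ (i : ℕ) (hi : i < k), 0 < b ⟨i, hi⟩ := fun i hi =>
    lt_of_lt_of_le (lt_of_le_of_lt (abs_nonneg _) h3) (hble (k - 1) i hi (by omega) (by omega))
  have hba : ∀ (i j : ℕ) (hi : i + 1 < k) (hj : j < k), i < j →
      b ⟨j, hj⟩ < a ⟨i, by omega⟩ := by
    intro i j hi hj hij
    rcases eq_or_lt_of_le (show i + 1 ≤ j by omega) with h | h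
    · have : j = i + 1 := h.symm
      subst this
      exact h2 i hi
    · exact (hbb j (i + 1) hi hj h).trans (h2 i hi)
  have hapos : ∀ (i : ℕ) (hi : i + 1 < k), 0 < a ⟨i, by omega⟩ := fun i hi =>
    (hbpos (i + 1) hi).trans (h2 i hi)
  have habs : ∀ (i : ℕ) (hi : i < k), |a ⟨i, hi⟩| < b ⟨i, hi⟩ := by
    intro i hi
    rcases eq_or_lt_of_le (show i ≤ k - 1 by omega) with h | h
    · subst h; exact h3
    · have hi1 : i + 1 < k := by omega
      rw [abs_of_pos (hapos i hi1)]
      exact h1 i hi1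
  have hord : ∀ l j : Fin k, ((j ≤ l → a l ^ 2 < b j ^ 2) ∧ (l < j → b j ^ 2 < a l ^ 2)) := by
    intro l j
    constructor
    · intro hjl
      have h' : |a l| < b j :=
        lt_of_lt_of_le (habs l.1 l.2) (hble l.1 j.1 j.2 l.2 hjl)
      exact sq_lt_sq' (abs_lt.mp h').1 (abs_lt.mp h').2
    · intro hlj
      have hlt : (l : ℕ) < j := hlj
      have h' : b j < a l := hba l.1 j.1 (by omega) j.2 hlt
      exact pow_lt_pow_left₀ h' (hbpos j.1 j.2).le (by norm_num)
  exact cauchy_aux k (fun i => a i ^ 2) (fun i => b i ^ 2) hord
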